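/- arXiv:1602.07715 — 3 statements merged into one kernel-verified Lean document; each statement's English description precedes it below -/
import Mathlib

section
/- The entropy distance H(L1,L2) = h(L1 Δ L2)/h(L1 ∪ L2) (with H = 0 if h(L1 ∪ L2) = 0) satisfies the ultra-metric inequality: H(L1,L3) ≤ max(H(L1,L2), H(L2,L3)) for all languages L1, L2, L3. -/
/-!
Write `m = h (L1 ∪ L3)`. Since `h (L1 ∆ L3) ≤ max (h (L1 ∆ L2)) (h (L2 ∆ L3))`, it suffices that
each distance on the right is at least the corresponding symmetric-difference entropy divided
by `m`, which holds as soon as `h L2 ≤ m`. Otherwise `h L2` strictly exceeds `h L1`, which forces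
`h (L1 ∆ L2) ≥ h L2 = h (L1 ∪ L2)`, so `entDist h L1 L2 = 1`, the largest possible distance.
-/

open scoped symmDiff

open Classical in
/-- The entropy distance built from an abstract entropy function `h`. -/
noncomputable def entDist {α : Type*} (h : Set (List α) → ℝ)
    (L1 L2 : Set (List α)) : ℝ :=
  if h (L1 ∪ L2) = 0 then 0
  else h ((L1 \ L2) ∪ (L2 \ L1)) / h (L1 ∪ L2)

section

variable {α : Type*} (h : Set (List α) → ℝ)

/-- The junk value `x / 0 = 0` already covers the degenerate branch of `entDist`. -/
theorem entDist_eq_div (A B : Set (List α)) : entDist h A B = h (A ∆ B) / h (A ∪ B) := by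
  unfold entDist
  split_ifs with h0
  · rw [h0, div_zero]
  · rfl

theorem entDist_le_one (hnonneg : ∀ A, 0 ≤ h A)
    (hmono : ∀ A B : Set (List α), A ⊆ B → h A ≤ h B) (A B : Set (List α)) :
    entDist h A B ≤ 1 := by
  rw [entDist_eq_div]
  exact div_le_one_of_le₀ (hmono _ _ symmDiff_le_sup) (hnonneg _)

theorem div_le_entDist (hnonneg : ∀ A, 0 ≤ h A)
    (hmono : ∀ A B : Set (List α), A ⊆ B → h A ≤ h B) {A B : Set (List α)} {m : ℝ}
    (hm : h (A ∪ B) ≤ m) : h (A ∆ B) / m ≤ entDist h A B := by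
  rw [entDist_eq_div]
  rcases (hnonneg (A ∪ B)).eq_or_lt with h0 | hpos
  · have : h (A ∆ B) = 0 :=
      le_antisymm ((hmono _ _ symmDiff_le_sup).trans h0.ge) (hnonneg _)
    simp [this]
  · exact div_le_div_of_nonneg_left (hnonneg _) hpos hm

theorem one_le_entDist_of_lt (hnonneg : ∀ A, 0 ≤ h A)
    (hmono : ∀ A B : Set (List α), A ⊆ B → h A ≤ h B)
    (hunion : ∀ A B : Set (List α), h (A ∪ B) = max (h A) (h B)) {A B : Set (List α)}
    (hlt : h A < h B) : 1 ≤ entDist h A B := by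
  have hAB : h (A ∪ B) = h B := by rw [hunion, max_eq_right hlt.le]
  have hB : h B ≤ h (A ∆ B) := by
    have := (hmono _ _ (le_symmDiff_sup_left A B)).trans_eq (hunion _ _)
    exact (le_max_iff.mp this).resolve_right hlt.not_ge
  rw [entDist_eq_div, hAB, one_le_div₀ ((hnonneg A).trans_lt hlt)]
  exact hB

end

theorem stmt12 {α : Type*} (h : Set (List α) → ℝ)
    (hnonneg : ∀ A, 0 ≤ h A)
    (hmono : ∀ A B : Set (List α), A ⊆ B → h A ≤ h B)
    (hunion : ∀ A B : Set (List α), h (A ∪ B) = max (h A) (h B))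
    (L1 L2 L3 : Set (List α)) :
    entDist h L1 L3 ≤ max (entDist h L1 L2) (entDist h L2 L3) := by
  set m := h (L1 ∪ L3)
  rcases le_or_gt (h L2) m with h2 | h2
  · have h1 : h L1 ≤ m := hmono _ _ Set.subset_union_left
    have h3 : h L3 ≤ m := hmono _ _ Set.subset_union_right
    have htriangle : h (L1 ∆ L3) ≤ max (h (L1 ∆ L2)) (h (L2 ∆ L3)) :=
      (hmono _ _ (symmDiff_triangle L1 L2 L3)).trans_eq (hunion _ _)
    calc entDist h L1 L3 = h (L1 ∆ L3) / m := entDist_eq_div h L1 L3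
      _ ≤ max (h (L1 ∆ L2)) (h (L2 ∆ L3)) / m := by gcongr; exact hnonneg _
      _ = max (h (L1 ∆ L2) / m) (h (L2 ∆ L3) / m) := (max_div_div_right (hnonneg _) _ _).symm
      _ ≤ max (entDist h L1 L2) (entDist h L2 L3) := by
        gcongr
        · exact div_le_entDist h hnonneg hmono ((hunion _ _).trans_le (max_le h1 h2))
        · exact div_le_entDist h hnonneg hmono ((hunion _ _).trans_le (max_le h2 h3))
  · have h12 : h L1 < h L2 := (hmono _ _ Set.subset_union_left).trans_lt h2
    calc entDist h L1 L3 ≤ 1 := entDist_le_one h hnonneg hmono L1 L3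
      _ ≤ entDist h L1 L2 := one_le_entDist_of_lt h hnonneg hmono hunion h12
      _ ≤ _ := le_max_left _ _
end

section
/- Let h: P(Σ*) → [0,∞) satisfy monotonicity (A ⊆ B ⇒ h(A) ≤ h(B)) and h(A ∪ B) = max(h(A), h(B)). Define H_S(L1,L2) = h(L1 ∩ L2ᶜ) + h(L1ᶜ ∩ L2). Then H_S satisfies the triangle inequality: H_S(L1,L3) ≤ H_S(L1,L2) + H_S(L2,L3). -/
/-- The entropy sum distance built from an abstract entropy function `h`. -/
def entSumDist {α : Type*} (h : Set (List α) → ℝ)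
    (L1 L2 : Set (List α)) : ℝ :=
  h (L1 ∩ L2ᶜ) + h (L1ᶜ ∩ L2)

section MaxUnion

variable {β M : Type*} [LinearOrder M] {h : Set β → M}

theorem monotone_of_map_union_eq_max (hunion : ∀ A B, h (A ∪ B) = max (h A) (h B)) :
    Monotone h := fun A B hAB => by
  rw [← Set.union_eq_self_of_subset_left hAB, hunion]
  exact le_max_left _ _

theorem map_diff_le_add_of_map_union_eq_max [AddCommMonoid M] [IsOrderedAddMonoid M]
    (hnonneg : ∀ A, 0 ≤ h A)
    (hunion : ∀ A B, h (A ∪ B) = max (h A) (h B)) (A B C : Set β) :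
    h (A \ C) ≤ h (A \ B) + h (B \ C) :=
  calc h (A \ C) ≤ h (A \ B ∪ B \ C) :=
        monotone_of_map_union_eq_max hunion (sdiff_triangle A B C)
    _ = max (h (A \ B)) (h (B \ C)) := hunion _ _
    _ ≤ h (A \ B) + h (B \ C) :=
        max_le (le_add_of_nonneg_right (hnonneg _)) (le_add_of_nonneg_left (hnonneg _))

end MaxUnion

theorem entSumDist_eq_add_diff {α : Type*} (h : Set (List α) → ℝ) (L1 L2 : Set (List α)) :
    entSumDist h L1 L2 = h (L1 \ L2) + h (L2 \ L1) := by
  rw [entSumDist, Set.sdiff_eq, Set.sdiff_eq, Set.inter_comm L2]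

theorem stmt13_general {α : Type*} (h : Set (List α) → ℝ)
    (hnonneg : ∀ A, 0 ≤ h A)
    (hunion : ∀ A B : Set (List α), h (A ∪ B) = max (h A) (h B))
    (L1 L2 L3 : Set (List α)) :
    entSumDist h L1 L3 ≤ entSumDist h L1 L2 + entSumDist h L2 L3 := by
  simp only [entSumDist_eq_add_diff]
  have forward := map_diff_le_add_of_map_union_eq_max hnonneg hunion L1 L2 L3
  have backward := map_diff_le_add_of_map_union_eq_max hnonneg hunion L3 L2 L1
  linarith

theorem stmt13 {α : Type*} (h : Set (List α) → ℝ)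
    (hnonneg : ∀ A, 0 ≤ h A)
    (hmono : ∀ A B : Set (List α), A ⊆ B → h A ≤ h B)
    (hunion : ∀ A B : Set (List α), h (A ∪ B) = max (h A) (h B))
    (L1 L2 L3 : Set (List α)) :
    entSumDist h L1 L3 ≤ entSumDist h L1 L2 + entSumDist h L2 L3 :=
  stmt13_general h hnonneg hunion L1 L2 L3
end

section
/- Let h: P(Σ*) → [0,∞) satisfy monotonicity and h(A ∪ B) = max(h(A), h(B)), and define H_S(L1,L2) = h(L1 ∩ L2ᶜ) + h(L1ᶜ ∩ L2). If h(L1 ∩ L2ᶜ) > 0 and h(L1ᶜ ∩ L2) > 0, then taking R = L1 ∪ L2 one has H_S(L1,L2) > max(H_S(L1,R), H_S(R,L2)). -/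
section Granularity

variable {α : Type*} (h : Set (List α) → ℝ) (L1 L2 : Set (List α))

theorem entSumDist_union_right : entSumDist h L1 (L1 ∪ L2) = h ∅ + h (L1ᶜ ∩ L2) := by
  have hleft : L1 ∩ (L1 ∪ L2)ᶜ = ∅ := by
    rw [Set.compl_union, ← Set.inter_assoc, Set.inter_compl_self, Set.empty_inter]
  have hright : L1ᶜ ∩ (L1 ∪ L2) = L1ᶜ ∩ L2 := by
    rw [Set.inter_union_distrib_left, Set.compl_inter_self, Set.empty_union]
  rw [entSumDist, hleft, hright]

theorem entSumDist_union_left : entSumDist h (L1 ∪ L2) L2 = h (L1 ∩ L2ᶜ) + h ∅ := by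
  have hleft : (L1 ∪ L2) ∩ L2ᶜ = L1 ∩ L2ᶜ := by
    rw [Set.union_inter_distrib_right, Set.inter_compl_self, Set.union_empty]
  have hright : (L1 ∪ L2)ᶜ ∩ L2 = ∅ := by
    rw [Set.compl_union, Set.inter_assoc, Set.compl_inter_self, Set.inter_empty]
  rw [entSumDist, hleft, hright]

end Granularity

theorem stmt14_general {α : Type*} (h : Set (List α) → ℝ)
    (hempty : h ∅ = 0)
    (L1 L2 : Set (List α))
    (h1 : 0 < h (L1 ∩ L2ᶜ)) (h2 : 0 < h (L1ᶜ ∩ L2)) :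
    entSumDist h L1 L2 >
      max (entSumDist h L1 (L1 ∪ L2)) (entSumDist h (L1 ∪ L2) L2) := by
  rw [entSumDist_union_right, entSumDist_union_left, hempty, zero_add, add_zero,
    gt_iff_lt, max_lt_iff, entSumDist]
  exact ⟨lt_add_of_pos_left _ h1, lt_add_of_pos_right _ h2⟩

theorem stmt14 {α : Type*} (h : Set (List α) → ℝ)
    (hnonneg : ∀ A, 0 ≤ h A)
    (hmono : ∀ A B : Set (List α), A ⊆ B → h A ≤ h B)
    (hunion : ∀ A B : Set (List α), h (A ∪ B) = max (h A) (h B))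
    (hempty : h ∅ = 0)
    (L1 L2 : Set (List α))
    (h1 : 0 < h (L1 ∩ L2ᶜ)) (h2 : 0 < h (L1ᶜ ∩ L2)) :
    entSumDist h L1 L2 >
      max (entSumDist h L1 (L1 ∪ L2)) (entSumDist h (L1 ∪ L2) L2) :=
  stmt14_general h hempty L1 L2 h1 h2
end
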